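/- For every natural number m, lim_{c→0, c≠0} Σ_{n∈ℤ} (c·n)^m |a_n(c)|² = ∫_{−√2}^{√2} x^m/(π√(2−x²)) dx; that is, the moments of the discrete arcsine law μ_c converge to those of the arcsine law as c tends to 0. -/

import Mathlib

/-!
The coefficients `a n = arcsineFourierCoeff c n` satisfy the Bessel recurrence
`c n a n = (√2 / 2) (a (n - 1) + a (n + 1))` (integrate the derivative of the integrand over a
period), and since `t ↦ exp (i √2 sin t / c)` has modulus one, Parseval gives
`∑ n, conj (a n) a (n + k) = δ k 0`. Iterating the recurrence writes `(c n)^m a n` as a finite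
combination `∑_{|k| ≤ m} shiftCoeff (√2 / 2) c m k * a (n + k)` with coefficients polynomial in
`c`, so the `m`-th moment of `μ_c` is `shiftCoeff (√2 / 2) c m 0`, continuous in `c`. At `c = 0`
the recursion defining `shiftCoeff` is that of the cosine coefficients of `(√2 cos t)^m` on
`[0, π]`, so the limit is `π⁻¹ ∫_0^π (√2 cos t)^m dt`, which the substitution `x = √2 cos t`
turns into the `m`-th moment of the arcsine law.
-/

open Filter

/-- `a_n(c)`, the `n`-th Fourier coefficient of `t ↦ exp(i·√2·sin t / c)`. -/
noncomputable def arcsineFourierCoeff (c : ℝ) (n : ℤ) : ℂ :=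
  (1 / (2 * Real.pi)) * ∫ t in (0 : ℝ)..(2 * Real.pi),
    Complex.exp (Complex.I * ((Real.sqrt 2 * Real.sin t / c : ℝ) : ℂ)) *
      Complex.exp (-(Complex.I * (n : ℂ) * (t : ℂ)))

section ShiftExpansion

open ComplexConjugate

variable (s c : ℝ)

noncomputable def shiftCoeff : ℕ → ℤ → ℝ
  | 0, k => if k = 0 then 1 else 0
  | m + 1, k => s * (shiftCoeff m (k + 1) + shiftCoeff m (k - 1)) - c * k * shiftCoeff m k

lemma shiftCoeff_eq_zero_of_notMem (m : ℕ) {k : ℤ} (hk : k ∉ Finset.Icc (-(m : ℤ)) m) :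
    shiftCoeff s c m k = 0 := by
  induction m generalizing k with
  | zero => simp_all [shiftCoeff]
  | succ m ih =>
    simp only [Finset.mem_Icc, not_and_or, not_le] at hk ih
    simp only [shiftCoeff]
    rw [ih (by omega), ih (by omega), ih (by omega)]
    ring

lemma continuous_shiftCoeff (m : ℕ) (k : ℤ) : Continuous fun c => shiftCoeff s c m k := by
  induction m generalizing k with
  | zero => exact continuous_const
  | succ m ih => simp only [shiftCoeff]; fun_prop

variable {s c} {a : ℤ → ℂ}

lemma hasSum_shiftCoeff_mul (ha : ∀ n : ℤ, c * n * a n = s * (a (n - 1) + a (n + 1)))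
    (m : ℕ) (n : ℤ) :
    HasSum (fun k => (shiftCoeff s c m k : ℂ) * a (n + k)) ((c * n) ^ m * a n) := by
  induction m generalizing n with
  | zero =>
    convert hasSum_single (f := fun k => (shiftCoeff s c 0 k : ℂ) * a (n + k)) 0
      (fun k hk => by simp [shiftCoeff, hk]) using 1
    simp [shiftCoeff]
  | succ m ih =>
    set p := shiftCoeff s c m
    have hprev : HasSum (fun k => (p (k + 1) : ℂ) * a (n + k))
        ((c * (n - 1 : ℤ)) ^ m * a (n - 1)) := by
      convert (Equiv.addRight (1 : ℤ)).hasSum_iff.mpr (ih (n - 1)) using 2 with k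
      simp only [Function.comp_apply, Equiv.coe_addRight]
      ring_nf
    have hnext : HasSum (fun k => (p (k - 1) : ℂ) * a (n + k))
        ((c * (n + 1 : ℤ)) ^ m * a (n + 1)) := by
      convert (Equiv.subRight (1 : ℤ)).hasSum_iff.mpr (ih (n + 1)) using 2 with k
      simp only [Function.comp_apply, Equiv.subRight_apply]
      ring_nf
    -- `c k = c (n + k) - c n`, and the recurrence at `n + k` expands the `c (n + k)` part
    have hweight : HasSum (fun k => (c * k * p k : ℂ) * a (n + k))
        (s * ((c * (n - 1 : ℤ)) ^ m * a (n - 1) + (c * (n + 1 : ℤ)) ^ m * a (n + 1))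
          - c * n * ((c * n) ^ m * a n)) := by
      refine ((((ih (n - 1)).add (ih (n + 1))).mul_left (s : ℂ)).sub
        ((ih n).mul_left ((c : ℂ) * n))).congr_fun fun k => ?_
      have h := ha (n + k)
      rw [show n + k - 1 = n - 1 + k by ring, show n + k + 1 = n + 1 + k by ring] at h
      push_cast at h
      linear_combination (p k : ℂ) * h
    have key := ((hprev.mul_left (s : ℂ)).add (hnext.mul_left (s : ℂ))).sub hweight
    refine (congrArg (HasSum _) ?_).mp (key.congr_fun fun k => ?_)
    · ring
    · simp only [shiftCoeff, p]
      push_cast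
      ring

lemma hasSum_mul_pow_mul_norm_sq (ha : ∀ n : ℤ, c * n * a n = s * (a (n - 1) + a (n + 1)))
    (horth : ∀ k : ℤ, HasSum (fun n => conj (a n) * a (n + k)) (if k = 0 then 1 else 0))
    (m : ℕ) : HasSum (fun n : ℤ => (c * n) ^ m * ‖a n‖ ^ 2) (shiftCoeff s c m 0) := by
  set S := Finset.Icc (-(m : ℤ)) m
  have hexpand (n : ℤ) :
      ((c : ℂ) * n) ^ m * a n = ∑ k ∈ S, (shiftCoeff s c m k : ℂ) * a (n + k) :=
    (hasSum_shiftCoeff_mul ha m n).unique <| hasSum_sum_of_ne_finset_zero fun k hk => by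
      simp [shiftCoeff_eq_zero_of_notMem s c m hk]
  have h : HasSum (fun n => ∑ k ∈ S, (shiftCoeff s c m k : ℂ) * (conj (a n) * a (n + k)))
      (∑ k ∈ S, (shiftCoeff s c m k : ℂ) * if k = 0 then 1 else 0) :=
    hasSum_sum fun k _ => (horth k).mul_left _
  rw [Finset.sum_eq_single_of_mem 0 (by simp [S]) (fun k _ hk => by simp [hk]), if_pos rfl,
    mul_one] at h
  refine Complex.hasSum_ofReal.mp (h.congr_fun fun n => ?_)
  push_cast
  rw [← Complex.mul_conj', ← mul_assoc, hexpand, Finset.sum_mul]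
  exact Finset.sum_congr rfl fun k _ => by ring

end ShiftExpansion

section ArcsineMoments

open Real MeasureTheory Set

lemma integral_cos_int_mul_div_pi (k : ℤ) :
    (∫ t in (0 : ℝ)..π, cos (k * t)) / π = if k = 0 then 1 else 0 := by
  split_ifs with hk
  · simp [hk, pi_ne_zero]
  · have hk' : (k : ℝ) ≠ 0 := by exact_mod_cast hk
    rw [intervalIntegral.integral_comp_mul_left (fun t => cos t) hk', integral_cos,
      mul_zero, sin_zero, sin_int_mul_pi]
    simp

lemma shiftCoeff_half_zero_eq_integral (r : ℝ) (m : ℕ) (k : ℤ) :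
    shiftCoeff (r / 2) 0 m k = (∫ t in (0 : ℝ)..π, (r * cos t) ^ m * cos (k * t)) / π := by
  induction m generalizing k with
  | zero => simp [shiftCoeff, integral_cos_int_mul_div_pi]
  | succ m ih =>
    have hprod (t : ℝ) : (r * cos t) ^ (m + 1) * cos (k * t) = r / 2 *
        ((r * cos t) ^ m * cos ((k + 1 : ℤ) * t) + (r * cos t) ^ m * cos ((k - 1 : ℤ) * t)) := by
      push_cast
      rw [add_mul, sub_mul, one_mul, cos_add, cos_sub]
      ring
    have hint (j : ℤ) : IntervalIntegrable (fun t => (r * cos t) ^ m * cos (j * t)) volume 0 π :=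
      (by fun_prop : Continuous _).intervalIntegrable _ _
    simp only [shiftCoeff, ih, zero_mul, sub_zero, hprod, intervalIntegral.integral_const_mul,
      intervalIntegral.integral_add (hint _) (hint _)]
    ring

lemma integral_pow_div_pi_mul_sqrt_eq (r : ℝ) (hr : 0 < r) (m : ℕ) :
    ∫ x in -r..r, x ^ m / (π * √(r ^ 2 - x ^ 2)) = (∫ t in (0 : ℝ)..π, (r * cos t) ^ m) / π := by
  have himage : (fun t => r * cos t) '' Icc 0 π = Icc (-r) r := by
    rw [← image_image (r * ·), bijOn_cos.image_eq, image_mul_left_Icc hr.le (by norm_num)]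
    simp
  have hinj : InjOn (fun t => r * cos t) (Icc 0 π) :=
    fun x hx y hy h => injOn_cos hx hy (mul_left_cancel₀ hr.ne' h)
  rw [intervalIntegral.integral_of_le (by linarith), ← integral_Icc_eq_integral_Ioc, ← himage,
    integral_image_eq_integral_abs_deriv_smul measurableSet_Icc
      (fun t _ => ((hasDerivAt_cos t).const_mul r).hasDerivWithinAt) hinj,
    integral_Icc_eq_integral_Ioo, intervalIntegral.integral_of_le pi_pos.le,
    integral_Ioc_eq_integral_Ioo, ← integral_div]
  refine setIntegral_congr_fun measurableSet_Ioo fun t ht => ?_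
  have hsin : 0 < sin t := sin_pos_of_pos_of_lt_pi ht.1 ht.2
  have hsqrt : √(r ^ 2 - (r * cos t) ^ 2) = r * sin t := by
    rw [show r ^ 2 - (r * cos t) ^ 2 = (r * sin t) ^ 2 by
      linear_combination -r ^ 2 * sin_sq_add_cos_sq t]
    exact sqrt_sq (by positivity)
  rw [hsqrt, mul_neg, abs_neg, abs_of_pos (by positivity), smul_eq_mul]
  field_simp

lemma arcsine_moment_eq_shiftCoeff (m : ℕ) :
    ∫ x in (-√2)..√2, x ^ m / (π * √(2 - x ^ 2)) = shiftCoeff (√2 / 2) 0 m 0 := by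
  have h := integral_pow_div_pi_mul_sqrt_eq √2 (by positivity) m
  rw [sq_sqrt zero_le_two] at h
  simp [h, shiftCoeff_half_zero_eq_integral]

end ArcsineMoments

section Parseval

open MeasureTheory AddCircle ComplexConjugate

variable {T : ℝ} [Fact (0 < T)]

lemma hasSum_conj_fourierCoeff_mul_fourierCoeff (f g : C(AddCircle T, ℂ)) :
    HasSum (fun n => conj (fourierCoeff f n) * fourierCoeff g n)
      (∫ x, conj (f x) * g x ∂haarAddCircle) := by
  have h := fourierBasis.hasSum_inner_mul_inner (ContinuousMap.toLp 2 haarAddCircle ℂ f)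
    (ContinuousMap.toLp 2 haarAddCircle ℂ g)
  rw [ContinuousMap.inner_toLp] at h
  simp only [mul_comm (g _)] at h
  refine h.congr_fun fun n => ?_
  rw [← inner_conj_symm, ← HilbertBasis.repr_apply_apply, ← HilbertBasis.repr_apply_apply,
    fourierBasis_repr, fourierBasis_repr, fourierCoeff_toLp, fourierCoeff_toLp]

lemma fourierCoeff_fourier_mul (f : AddCircle T → ℂ) (k n : ℤ) :
    fourierCoeff (⇑(fourier k) * f) n = fourierCoeff f (n - k) := by
  simp only [fourierCoeff, smul_eq_mul, Pi.mul_apply, show -(n - k) = k + -n by ring, fourier_add]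
  congr 1 with x
  ring

lemma integral_fourier (n : ℤ) :
    ∫ x : AddCircle T, fourier n x ∂haarAddCircle = if n = 0 then 1 else 0 := by
  have h := orthonormal_iff_ite.mp (orthonormal_fourier (T := T)) 0 n
  simpa [ContinuousMap.inner_toLp, fourier_zero, eq_comm] using h

lemma hasSum_conj_fourierCoeff_mul_fourierCoeff_add {f : C(AddCircle T, ℂ)}
    (hf : ∀ x, ‖f x‖ = 1) (k : ℤ) :
    HasSum (fun n => conj (fourierCoeff f n) * fourierCoeff f (n + k))
      (if k = 0 then 1 else 0) := by
  have h := hasSum_conj_fourierCoeff_mul_fourierCoeff f (fourier (-k) * f)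
  simp only [ContinuousMap.coe_mul, fourierCoeff_fourier_mul, sub_neg_eq_add, Pi.mul_apply,
    mul_left_comm (conj _), Complex.conj_mul', hf, one_pow, Complex.ofReal_one, mul_one,
    integral_fourier, neg_eq_zero] at h
  exact h

end Parseval

section ArcsineFourierCoeff

open Real MeasureTheory Complex ComplexConjugate

noncomputable def arcsineWave (c t : ℝ) : ℂ := exp (I * ((√2 * Real.sin t / c : ℝ) : ℂ))

noncomputable def arcsineIntegrand (c : ℝ) (n : ℤ) (t : ℝ) : ℂ :=
  arcsineWave c t * exp (-(I * n * t))

lemma arcsineFourierCoeff_eq_integral (c : ℝ) (n : ℤ) :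
    arcsineFourierCoeff c n = (1 / (2 * π)) * ∫ t in (0 : ℝ)..2 * π, arcsineIntegrand c n t :=
  rfl

lemma continuous_arcsineWave (c : ℝ) : Continuous (arcsineWave c) := by
  unfold arcsineWave
  fun_prop

lemma continuous_arcsineIntegrand (c : ℝ) (n : ℤ) : Continuous (arcsineIntegrand c n) := by
  have := continuous_arcsineWave c
  unfold arcsineIntegrand
  fun_prop

lemma hasDerivAt_arcsineWave (c t : ℝ) :
    HasDerivAt (arcsineWave c) (I * ((√2 * Real.cos t / c : ℝ) : ℂ) * arcsineWave c t) t := by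
  have h := (((Real.hasDerivAt_sin t).const_mul √2).div_const c).ofReal_comp.const_mul I |>.cexp
  rw [mul_comm] at h
  exact h

lemma arcsineIntegrand_sub (c : ℝ) (n j : ℤ) (t : ℝ) :
    arcsineIntegrand c (n - j) t = arcsineIntegrand c n t * exp (j * t * I) := by
  rw [arcsineIntegrand, arcsineIntegrand, mul_assoc (arcsineWave c t), ← Complex.exp_add]
  congr 2
  push_cast
  ring

lemma two_mul_cos_mul_arcsineIntegrand (c : ℝ) (n : ℤ) (t : ℝ) :
    2 * (Real.cos t : ℂ) * arcsineIntegrand c n t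
      = arcsineIntegrand c (n - 1) t + arcsineIntegrand c (n + 1) t := by
  rw [arcsineIntegrand_sub, show n + 1 = n - (-1) by ring, arcsineIntegrand_sub, ofReal_cos,
    Complex.two_cos]
  push_cast
  ring_nf

lemma hasDerivAt_arcsineIntegrand (c : ℝ) (n : ℤ) (t : ℝ) :
    HasDerivAt (arcsineIntegrand c n) (I * √2 / (2 * c) *
      (arcsineIntegrand c (n - 1) t + arcsineIntegrand c (n + 1) t)
        - I * n * arcsineIntegrand c n t) t := by
  have hexp : HasDerivAt (fun s : ℝ => exp (-(I * n * s))) (-(I * n) * exp (-(I * n * t))) t := by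
    simpa [mul_comm] using ((hasDerivAt_id (t : ℂ)).const_mul (-(I * n))).cexp.comp_ofReal
  refine ((hasDerivAt_arcsineWave c t).mul hexp).congr_deriv ?_
  rw [← two_mul_cos_mul_arcsineIntegrand, arcsineIntegrand]
  push_cast
  field_simp
  ring

lemma arcsineIntegrand_two_pi (c : ℝ) (n : ℤ) :
    arcsineIntegrand c n (2 * π) = arcsineIntegrand c n 0 := by
  simp only [arcsineIntegrand, arcsineWave, Real.sin_two_pi, Real.sin_zero]
  rw [show -(I * n * ((2 * π : ℝ) : ℂ)) = ((-n : ℤ) : ℂ) * (2 * π * I) by push_cast; ring,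
    exp_int_mul_two_pi_mul_I]
  simp

lemma arcsineFourierCoeff_recurrence {c : ℝ} (hc : c ≠ 0) (n : ℤ) :
    (c : ℂ) * n * arcsineFourierCoeff c n
      = ((√2 / 2 : ℝ) : ℂ) * (arcsineFourierCoeff c (n - 1) + arcsineFourierCoeff c (n + 1)) := by
  have hint (j : ℤ) : IntervalIntegrable (arcsineIntegrand c j) volume 0 (2 * π) :=
    (continuous_arcsineIntegrand c j).intervalIntegrable _ _
  have hcoeff (j : ℤ) :
      ∫ t in (0 : ℝ)..2 * π, arcsineIntegrand c j t = 2 * π * arcsineFourierCoeff c j := by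
    rw [arcsineFourierCoeff_eq_integral]
    field_simp
  have hftc := intervalIntegral.integral_eq_sub_of_hasDerivAt
    (fun t _ => hasDerivAt_arcsineIntegrand c n t)
    (((hint _).add (hint _)).const_mul _ |>.sub ((hint n).const_mul _))
  rw [arcsineIntegrand_two_pi, sub_self, intervalIntegral.integral_sub
    (((hint _).add (hint _)).const_mul _) ((hint n).const_mul _),
    intervalIntegral.integral_const_mul, intervalIntegral.integral_const_mul,
    intervalIntegral.integral_add (hint _) (hint _), hcoeff, hcoeff, hcoeff] at hftc
  field_simp at hftc
  simp only [mul_eq_zero, I_ne_zero, ofReal_eq_zero, pi_ne_zero, false_or] at hftc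
  rw [sub_eq_zero, div_eq_iff (ofReal_ne_zero.mpr hc)] at hftc
  push_cast
  linear_combination -hftc / 2

lemma periodic_arcsineWave (c : ℝ) : Function.Periodic (arcsineWave c) (2 * π) := fun t => by
  simp [arcsineWave, Real.sin_add_two_pi]

local instance : Fact (0 < 2 * π) := ⟨two_pi_pos⟩

noncomputable def arcsineWaveCircle (c : ℝ) : C(AddCircle (2 * π), ℂ) :=
  ⟨(periodic_arcsineWave c).lift, continuous_coinduced_dom.mpr (continuous_arcsineWave c)⟩

lemma norm_arcsineWaveCircle (c : ℝ) (x : AddCircle (2 * π)) : ‖arcsineWaveCircle c x‖ = 1 := by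
  induction x using QuotientAddGroup.induction_on with
  | H t => rw [arcsineWaveCircle, ContinuousMap.coe_mk, Function.Periodic.lift_coe, arcsineWave,
      mul_comm, norm_exp_ofReal_mul_I]

lemma fourierCoeff_arcsineWaveCircle (c : ℝ) (n : ℤ) :
    fourierCoeff (arcsineWaveCircle c) n = arcsineFourierCoeff c n := by
  rw [fourierCoeff_eq_intervalIntegral _ n 0, zero_add, arcsineFourierCoeff_eq_integral,
    real_smul]
  push_cast
  congr 1
  refine intervalIntegral.integral_congr fun t _ => ?_
  rw [smul_eq_mul, mul_comm, fourier_coe_apply]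
  congr 2
  field_simp
  push_cast
  ring

lemma hasSum_conj_arcsineFourierCoeff_mul (c : ℝ) (k : ℤ) :
    HasSum (fun n => conj (arcsineFourierCoeff c n) * arcsineFourierCoeff c (n + k))
      (if k = 0 then 1 else 0) := by
  simpa only [fourierCoeff_arcsineWaveCircle] using
    hasSum_conj_fourierCoeff_mul_fourierCoeff_add (norm_arcsineWaveCircle c) k

end ArcsineFourierCoeff

/-- As `c → 0` through nonzero values, the moments of the discrete arcsine law `μ_c`
converge to the moments of the arcsine law. -/
theorem discreteArcsine_moments_tendsto_arcsine (m : ℕ) :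
    Tendsto (fun c : ℝ => ∑' n : ℤ, (c * (n : ℝ)) ^ m * ‖arcsineFourierCoeff c n‖ ^ 2)
      (nhdsWithin 0 {c : ℝ | c ≠ 0})
      (nhds (∫ x in (-Real.sqrt 2)..(Real.sqrt 2), x ^ m / (Real.pi * Real.sqrt (2 - x ^ 2)))) := by
  rw [arcsine_moment_eq_shiftCoeff]
  refine tendsto_nhdsWithin_congr (fun c hc => (hasSum_mul_pow_mul_norm_sq
    (arcsineFourierCoeff_recurrence hc) (hasSum_conj_arcsineFourierCoeff_mul c) m).tsum_eq.symm) ?_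
  exact (continuous_shiftCoeff _ m 0).continuousAt.tendsto.mono_left nhdsWithin_le_nhds
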